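/- Let (g, [·,·]_g, φ_g) and (h, [·,·]_h, φ_h) be regular Hom-Lie algebras over a field K, let ρ : g → gl(h) be linear and ω : g × g → h be bilinear and skew-symmetric. Define on g ⊕ h the bracket [x+u, y+v]_{(ρ,ω)} = [x,y]_g + ω(x,y) + ρ_x(v) − ρ_y(u) + [u,v]_h and the map φ(x+u) = φ_g(x) + φ_h(u). Then (g ⊕ h, [·,·]_{(ρ,ω)}, φ) is a Hom-Lie algebra if and only if the following five conditions hold for all x,y,z ∈ g and u,v ∈ h: (p1) φ_h(ω(x,y)) = ω(φ_g(x), φ_g(y)); (p2) φ_h ∘ ρ_x = ρ_{φ_g(x)} ∘ φ_h; (p3) ρ_x([u,v]_h) = [φ_h(u), (φ_h⁻¹ ∘ ρ_x ∘ φ_h)(v)]_h + [(φ_h⁻¹ ∘ ρ_x ∘ φ_h)(u), φ_h(v)]_h; (p4) [ρ_x, ρ_y]_{φ_h} − ρ_{[x,y]_g} = ad_{ω(x,y)}; (p5) ρ_{φ_g(x)}(ω(y,z)) + ρ_{φ_g(y)}(ω(z,x)) + ρ_{φ_g(z)}(ω(x,y)) = ω([x,y]_g, φ_g(z)) + ω([y,z]_g,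 φ_g(x)) + ω([z,x]_g, φ_g(y)). -/
import Mathlib


/-- The bracket `[A,B]_φ = φ∘A∘φ⁻¹∘B∘φ⁻¹ − φ∘B∘φ⁻¹∘A∘φ⁻¹` on `gl(h)`. -/
def glBr {K : Type*} [Field K] {h : Type*} [AddCommGroup h] [Module K h]
    (φ : h ≃ₗ[K] h) (A B : h →ₗ[K] h) : h →ₗ[K] h :=
  φ.toLinearMap ∘ₗ A ∘ₗ φ.symm.toLinearMap ∘ₗ B ∘ₗ φ.symm.toLinearMap
  - φ.toLinearMap ∘ₗ B ∘ₗ φ.symm.toLinearMap ∘ₗ A ∘ₗ φ.symm.toLinearMap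

/-- The bracket `[x+u, y+v]_{(ρ,ω)} = [x,y]_g + ω(x,y) + ρ_x(v) − ρ_y(u) + [u,v]_h`
on `g ⊕ h`. -/
def extBr {K : Type*} [Field K] {g h : Type*}
    [AddCommGroup g] [Module K g] [AddCommGroup h] [Module K h]
    (brg : g →ₗ[K] g →ₗ[K] g) (brh : h →ₗ[K] h →ₗ[K] h)
    (ρ : g →ₗ[K] Module.End K h) (ω : g →ₗ[K] g →ₗ[K] h)
    (X Y : g × h) : g × h :=
  (brg X.1 Y.1, ω X.1 Y.1 + ρ X.1 Y.2 - ρ Y.1 X.2 + brh X.2 Y.2)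

/-- The map `φ(x+u) = φ_g(x) + φ_h(u)` on `g ⊕ h`. -/
def extPhi {K : Type*} [Field K] {g h : Type*}
    [AddCommGroup g] [Module K g] [AddCommGroup h] [Module K h]
    (φg : g ≃ₗ[K] g) (φh : h ≃ₗ[K] h) (X : g × h) : g × h :=
  (φg X.1, φh X.2)

/-- `(g ⊕ h, [·,·]_{(ρ,ω)}, φ)` is a Hom-Lie algebra if and only if
conditions (p1)–(p5) hold. -/
theorem stmt13 {K : Type*} [Field K] {g h : Type*}
    [AddCommGroup g] [Module K g] [AddCommGroup h] [Module K h]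
    -- the regular Hom-Lie algebra g
    (brg : g →ₗ[K] g →ₗ[K] g) (φg : g ≃ₗ[K] g)
    (hskewg : ∀ x y, brg x y = - brg y x)
    (hmulg : ∀ x y, φg (brg x y) = brg (φg x) (φg y))
    (hjacg : ∀ x y z,
      brg (φg x) (brg y z) + brg (φg y) (brg z x) + brg (φg z) (brg x y) = 0)
    -- the regular Hom-Lie algebra h
    (brh : h →ₗ[K] h →ₗ[K] h) (φh : h ≃ₗ[K] h)
    (hskewh : ∀ u v, brh u v = - brh v u)
    (hmulh : ∀ u v, φh (brh u v) = brh (φh u) (φh v))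
    (hjach : ∀ u v w,
      brh (φh u) (brh v w) + brh (φh v) (brh w u) + brh (φh w) (brh u v) = 0)
    -- ρ linear, ω bilinear skew-symmetric
    (ρ : g →ₗ[K] Module.End K h) (ω : g →ₗ[K] g →ₗ[K] h)
    (hωskew : ∀ x y, ω x y = - ω y x) :
    -- (g ⊕ h, [·,·]_{(ρ,ω)}, φ) is a Hom-Lie algebra ...
    ((∀ X Y : g × h, extBr brg brh ρ ω X Y = - extBr brg brh ρ ω Y X) ∧
     (∀ X Y : g × h,
        extPhi φg φh (extBr brg brh ρ ω X Y)
          = extBr brg brh ρ ω (extPhi φg φh X) (extPhi φg φh Y)) ∧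
     (∀ X Y Z : g × h,
        extBr brg brh ρ ω (extPhi φg φh X) (extBr brg brh ρ ω Y Z)
          + extBr brg brh ρ ω (extPhi φg φh Y) (extBr brg brh ρ ω Z X)
          + extBr brg brh ρ ω (extPhi φg φh Z) (extBr brg brh ρ ω X Y) = 0))
    ↔
    -- ... if and only if (p1)-(p5) hold
    ((∀ x y, φh (ω x y) = ω (φg x) (φg y)) ∧
     (∀ x u, φh (ρ x u) = ρ (φg x) (φh u)) ∧
     (∀ x u v, ρ x (brh u v)
        = brh (φh u) (φh.symm (ρ x (φh v))) + brh (φh.symm (ρ x (φh u))) (φh v)) ∧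
     (∀ x y, glBr φh (ρ x) (ρ y) - ρ (brg x y) = brh (ω x y)) ∧
     (∀ x y z,
        ρ (φg x) (ω y z) + ρ (φg y) (ω z x) + ρ (φg z) (ω x y)
          = ω (brg x y) (φg z) + ω (brg y z) (φg x) + ω (brg z x) (φg y))) := by
  constructor
  · rintro ⟨hskew, hmul, hjac⟩
    have p1 : ∀ x y, φh (ω x y) = ω (φg x) (φg y) := by
      intro x y
      simpa [extBr, extPhi] using congrArg Prod.snd (hmul (x, 0) (y, 0))
    have p2 : ∀ x u, φh (ρ x u) = ρ (φg x) (φh u) := by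
      intro x u
      simpa [extBr, extPhi] using congrArg Prod.snd (hmul (x, 0) (0, u))
    have q2 : ∀ x u, φh.symm (ρ x (φh u)) = ρ (φg.symm x) u := by
      intro x u
      apply φh.injective
      rw [LinearEquiv.apply_symm_apply, p2, LinearEquiv.apply_symm_apply]
    refine ⟨p1, p2, ?_, ?_, ?_⟩
    · -- p3
      intro x u v
      have h := congrArg Prod.snd (hjac (φg.symm x, 0) (0, u) (0, v))
      simp [extBr, extPhi] at h
      rw [q2, q2, hskewh (ρ (φg.symm x) u) (φh v)]
      linear_combination (norm := abel) h
    · -- p4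
      intro x y
      ext w'
      have h := congrArg Prod.snd (hjac (x, 0) (y, 0) (0, φh.symm w'))
      simp [extBr, extPhi] at h
      simp only [glBr, LinearMap.sub_apply, LinearMap.comp_apply,
        LinearEquiv.coe_coe, LinearEquiv.apply_symm_apply]
      rw [p2, p2, LinearEquiv.apply_symm_apply, LinearEquiv.apply_symm_apply,
        hskewh (ω x y) w']
      linear_combination (norm := abel) h
    · -- p5
      intro x y z
      have h := congrArg Prod.snd (hjac (x, 0) (y, 0) (z, 0))
      simp [extBr, extPhi] at h
      rw [hωskew (brg x y) (φg z), hωskew (brg y z) (φg x), hωskew (brg z x) (φg y)]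
      linear_combination (norm := abel) h
  · rintro ⟨p1, p2, p3, p4, p5⟩
    have q2 : ∀ x u, φh.symm (ρ (φg x) (φh u)) = ρ x u := by
      intro x u
      rw [← p2, LinearEquiv.symm_apply_apply]
    -- L2 : derived from p3 and p2
    have L2 : ∀ x v w, ρ (φg x) (brh v w)
        = brh (φh v) (ρ x w) - brh (φh w) (ρ x v) := by
      intro x v w
      rw [p3 (φg x) v w, q2, q2, hskewh (ρ x v) (φh w)]
      abel
    -- L1 : derived from p4 and p2
    have L1 : ∀ x y w, ρ (φg x) (ρ y w) - ρ (φg y) (ρ x w)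
        - ρ (brg x y) (φh w) + brh (φh w) (ω x y) = 0 := by
      intro x y w
      have h := congrArg (fun f : h →ₗ[K] h => f (φh w)) (p4 x y)
      simp only [glBr, LinearMap.sub_apply, LinearMap.comp_apply,
        LinearEquiv.coe_coe, LinearEquiv.symm_apply_apply] at h
      simp only [p2, LinearEquiv.apply_symm_apply] at h
      rw [hskewh (φh w) (ω x y)]
      linear_combination (norm := abel) h
    refine ⟨?_, ?_, ?_⟩
    · rintro ⟨x, u⟩ ⟨y, v⟩
      have h1 : brg x y = -brg y x := hskewg x y
      have h2 : ω x y = -ω y x := hωskew x y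
      have h3 : brh u v = -brh v u := hskewh u v
      simp only [extBr, Prod.neg_mk, Prod.mk.injEq]
      constructor
      · exact h1
      · rw [h2, h3]; abel
    · rintro ⟨x, u⟩ ⟨y, v⟩
      simp only [extBr, extPhi, Prod.mk.injEq, map_add, map_sub]
      exact ⟨hmulg x y, by rw [p1, p2, p2, hmulh]⟩
    · rintro ⟨x, u⟩ ⟨y, v⟩ ⟨z, w⟩
      simp only [extBr, extPhi, Prod.mk_add_mk, Prod.mk_eq_zero, map_add, map_sub]
      constructor
      · exact hjacg x y z
      · have hA : ρ (φg x) (ω y z) + ρ (φg y) (ω z x) + ρ (φg z) (ω x y)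
            = ω (brg x y) (φg z) + ω (brg y z) (φg x) + ω (brg z x) (φg y) := p5 x y z
        have hB := hjach u v w
        have hCu := L1 y z u
        have hCv := L1 z x v
        have hCw := L1 x y w
        have hDvw := L2 x v w
        have hDwu := L2 y w u
        have hDuv := L2 z u v
        have e1 : ω (φg x) (brg y z) = -ω (brg y z) (φg x) := hωskew _ _
        have e2 : ω (φg y) (brg z x) = -ω (brg z x) (φg y) := hωskew _ _
        have e3 : ω (φg z) (brg x y) = -ω (brg x y) (φg z) := hωskew _ _
        linear_combination (norm := abel) hA + hB + hCu + hCv + hCw + hDvw + hDwu + hDuv + e1 + e2 + e3
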